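/- Let X be a uniformly discrete metric space with bounded geometry and let Γ be a countable group acting freely on X by isometries with finitely many orbits; let D ⊆ X be a (necessarily finite) set containing exactly one point of each orbit. For T ∈ ℂ[X]^Γ and g ∈ Γ let T^{(g)} be the D×D matrix with entries (T^{(g)})_{x,y} = T_{x, g·y} (x,y ∈ D), which are compact operators on H₀. Then only finitely many T^{(g)} are nonzero, and the map ψ_D : T ↦ Σ_{g∈Γ} u_g ⊗ T^{(g)} is a *-algebra isomorphism from ℂ[X]^Γ onto ℂ[Γ] ⊗ M_D(K(H₀)), the algebraic tensor product of the complex group algebra of Γ and the *-algebra of D×D matrices with entries compact operators on H₀, where the star on the tensor product is determined by (u_g ⊗ k)* = u_{g⁻¹} ⊗ k*. -/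

import Mathlib

noncomputable section

open scoped ENNReal

/-- ℓ²(Y, H): the Hilbert space of square-summable `H`-valued families indexed by `Y`. -/
abbrev L2 (Y : Type*) (H : Type*) [NormedAddCommGroup H] [InnerProductSpace ℂ H] : Type _ :=
  lp (fun _ : Y => H) 2

namespace Roe

variable {Y H : Type*} [NormedAddCommGroup H] [InnerProductSpace ℂ H]

set_option maxHeartbeats 1000000 in
/-- The matrix entry `T_{x,y}` of a bounded operator `T` on `ℓ²(Y,H)`: the continuous linear
map on `H` determined by `T_{x,y} v = (T (δ_y ⊗ v)) x`. -/
def entry (T : L2 Y H →L[ℂ] L2 Y H) (x y : Y) : H →L[ℂ] H :=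
  letI := Classical.decEq Y
  LinearMap.mkContinuous
    { toFun := fun v => T (lp.single 2 y v) x
      map_add' := by
        intro v w
        show (T (lp.single 2 y (v + w))) x = (T (lp.single 2 y v)) x + (T (lp.single 2 y w)) x
        have h : lp.single (E := fun _ : Y => H) 2 y (v + w)
            = lp.single 2 y v + lp.single 2 y w := by
          apply lp.ext
          funext j
          by_cases hj : j = y
          · subst hj
            simp only [lp.single_apply_self, lp.coeFn_add, Pi.add_apply]
          · simp only [lp.single_apply_ne _ _ _ hj, lp.coeFn_add, Pi.add_apply, add_zero]
        rw [h, map_add]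
        simp only [lp.coeFn_add, Pi.add_apply]
      map_smul' := by
        intro c v
        show (T (lp.single 2 y (c • v))) x = c • (T (lp.single 2 y v)) x
        rw [lp.single_smul, map_smul]
        simp only [lp.coeFn_smul, Pi.smul_apply] }
    ‖T‖
    (by
      intro v
      show ‖(T (lp.single 2 y v)) x‖ ≤ ‖T‖ * ‖v‖
      have h1 : ‖(T (lp.single 2 y v)) x‖ ≤ ‖T (lp.single 2 y v)‖ :=
        lp.norm_apply_le_norm (by norm_num) _ _
      have h2 : ‖T (lp.single 2 y v)‖ ≤ ‖T‖ * ‖lp.single (E := fun _ : Y => H) 2 y v‖ :=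
        T.le_opNorm _
      have h3 : ‖lp.single (E := fun _ : Y => H) 2 y v‖ = ‖v‖ := by
        simpa using lp.norm_single (E := fun _ : Y => H) (p := 2) (by norm_num) (fun _ => v) y
      calc ‖(T (lp.single 2 y v)) x‖ ≤ ‖T‖ * ‖lp.single (E := fun _ : Y => H) 2 y v‖ :=
            le_trans h1 h2
        _ = ‖T‖ * ‖v‖ := by rw [h3])

/-- `T` has propagation at most `R` with respect to the distance function `d`. -/
def PropagationLE (d : Y → Y → ℝ) (T : L2 Y H →L[ℂ] L2 Y H) (R : ℝ) : Prop :=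
  ∀ x y : Y, R < d x y → entry T x y = 0

/-- A set is bounded with respect to the distance function `d`. -/
def DBounded (d : Y → Y → ℝ) (B : Set Y) : Prop :=
  ∃ C : ℝ, ∀ x ∈ B, ∀ y ∈ B, d x y ≤ C

/-- `T` is locally compact with respect to the distance function `d`: all matrix entries are
compact operators, and over every bounded set only finitely many matrix entries are nonzero. -/
def LocallyCompact (d : Y → Y → ℝ) (T : L2 Y H →L[ℂ] L2 Y H) : Prop :=
  (∀ x y : Y, IsCompactOperator (entry T x y)) ∧
    ∀ B : Set Y, DBounded d B →
      {p : Y × Y | p.1 ∈ B ∧ p.2 ∈ B ∧ entry T p.1 p.2 ≠ 0}.Finite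

/-- Membership in the algebraic Roe algebra `ℂ[Y]`: locally compact and finite propagation. -/
def MemRoeAlgebraic (d : Y → Y → ℝ) (T : L2 Y H →L[ℂ] L2 Y H) : Prop :=
  LocallyCompact d T ∧ ∃ R : ℝ, PropagationLE d T R

/-- The Roe algebra `C*(Y)`: the operator-norm closure of `ℂ[Y]` in `B(ℓ²(Y,H))`. -/
def RoeAlgebra (d : Y → Y → ℝ) : Set (L2 Y H →L[ℂ] L2 Y H) :=
  closure {T | MemRoeAlgebraic d T}

/-- `T` is a ghost operator with respect to the distance function `d`. -/
def IsGhost (d : Y → Y → ℝ) (T : L2 Y H →L[ℂ] L2 Y H) : Prop :=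
  ∀ R : ℝ, 0 < R → ∀ ε : ℝ, 0 < ε → ∃ B : Set Y, DBounded d B ∧
    ∀ ξ : L2 Y H, ‖ξ‖ = 1 →
      (∃ x : Y, x ∉ B ∧ ∀ z : Y, ξ z ≠ 0 → d x z < R) → ‖T ξ‖ < ε

/-- The support of `ξ ∈ ℓ²(Y,H)` has diameter at most `S` for the distance function `d`. -/
def SupportDiamLE (d : Y → Y → ℝ) (ξ : L2 Y H) (S : ℝ) : Prop :=
  ∀ z w : Y, ξ z ≠ 0 → ξ w ≠ 0 → d z w ≤ S

end Roe

/-- `π : X' → X` is a `K`-metric cover: it is surjective, and for every `u` the restriction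
of `π` to the open ball of radius `K` about `u` is a distance-preserving bijection onto the
open ball of radius `K` about `π u`. -/
def IsMetricCover {X' X : Type*} (d' : X' → X' → ℝ) (d : X → X → ℝ)
    (π : X' → X) (K : ℝ) : Prop :=
  Function.Surjective π ∧
    ∀ u : X', Set.BijOn π {w | d' u w < K} {x | d (π u) x < K} ∧
      ∀ w w' : X', d' u w < K → d' u w' < K → d (π w) (π w') = d' w w'

/-- `T'` is the lift of `T` at scale `R` along `π`: its matrix entries are
`T'_{u,v} = T_{π u, π v}` when `d'(u,v) ≤ R` and `0` otherwise. -/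
def IsLift {X' X H : Type*} [NormedAddCommGroup H] [InnerProductSpace ℂ H]
    (π : X' → X) (d' : X' → X' → ℝ)
    (T : L2 X H →L[ℂ] L2 X H) (R : ℝ) (T' : L2 X' H →L[ℂ] L2 X' H) : Prop :=
  ∀ u v : X', (d' u v ≤ R → Roe.entry T' u v = Roe.entry T (π u) (π v)) ∧
    (R < d' u v → Roe.entry T' u v = 0)

/-- `T'` is the lift at scale `S` along `π` of the `n`-th diagonal block `T⁽ⁿ⁾ = PₙTPₙ` of a
bounded operator `T` on `ℓ²(⊔ₙ Vₙ, H)`. -/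
def IsBlockLift {V : ℕ → Type*} {W H : Type*} [NormedAddCommGroup H] [InnerProductSpace ℂ H]
    {n : ℕ} (π : W → V n) (d' : W → W → ℝ)
    (T : L2 (Σ k, V k) H →L[ℂ] L2 (Σ k, V k) H) (S : ℝ)
    (T' : L2 W H →L[ℂ] L2 W H) : Prop :=
  ∀ u v : W, (d' u v ≤ S → Roe.entry T' u v = Roe.entry T ⟨n, π u⟩ ⟨n, π v⟩) ∧
    (S < d' u v → Roe.entry T' u v = 0)

/-- The graph metric of a simple graph, as a real-valued distance function
(shortest path length). -/
def gdist {V : Type*} (G : SimpleGraph V) (u v : V) : ℝ := G.dist u v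


/-- The coefficient map `ψ_D`: to an equivariant operator `T` it assigns, for each `g ∈ Γ`,
the `D × D` matrix `T^{(g)}` with entries `(T^{(g)})_{x,y} = T_{x, g·y}`, so that
`ψ_D(T) = Σ_g u_g ⊗ T^{(g)}`. -/
def psiD {H₀ X Γ : Type} [NormedAddCommGroup H₀] [InnerProductSpace ℂ H₀]
    [Group Γ] [MulAction Γ X] (D : Set X)
    (T : L2 X H₀ →L[ℂ] L2 X H₀) (g : Γ) : Matrix ↥D ↥D (H₀ →L[ℂ] H₀) :=
  fun x y => Roe.entry T (x : X) (g • (y : X))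

/-!
Since `Γ` acts freely and `D` meets every orbit exactly once, `(g, d) ↦ g • d` identifies
`Γ × D` with `X`; so every pair `(x, y)` has a relative position `(h, d, d')`, characterised
by `x = γ • d` and `y = (γ * h) • d'` for some `γ`. The entries of an invariant operator depend
only on the relative position, and the entries at position `(h, d, d')` are those of `ψ_D(T)`:
this gives injectivity, and reading the row sum of `T₁ ∘ T₂` and the adjoint in these
coordinates gives the convolution and star formulas. Finite propagation together with
finiteness of balls makes `ψ_D(T)` finitely supported. Conversely, `f` is realised as a finite
sum of weighted composition operators, one for each relative position in its support, and
finiteness of balls makes the result locally compact.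
-/

namespace Roe

variable {Y H : Type*} [NormedAddCommGroup H] [InnerProductSpace ℂ H]

theorem entry_apply [DecidableEq Y] (T : L2 Y H →L[ℂ] L2 Y H) (x y : Y) (v : H) :
    entry T x y v = T (lp.single 2 y v) x := by
  obtain rfl : Classical.decEq Y = ‹DecidableEq Y› := Subsingleton.elim _ _
  rfl

theorem entry_add (T₁ T₂ : L2 Y H →L[ℂ] L2 Y H) (x y : Y) :
    entry (T₁ + T₂) x y = entry T₁ x y + entry T₂ x y := by
  classical
  ext v
  simp [entry_apply]

theorem entry_smul (a : ℂ) (T : L2 Y H →L[ℂ] L2 Y H) (x y : Y) :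
    entry (a • T) x y = a • entry T x y := by
  classical
  ext v
  simp [entry_apply]

theorem entry_sum {ι : Type*} (s : Finset ι) (T : ι → (L2 Y H →L[ℂ] L2 Y H)) (x y : Y) :
    entry (∑ i ∈ s, T i) x y = ∑ i ∈ s, entry (T i) x y :=
  map_sum (AddMonoidHom.mk' (entry · x y) (entry_add · · x y)) T s

theorem hasSum_entry_apply (T : L2 Y H →L[ℂ] L2 Y H) (ξ : L2 Y H) (x : Y) :
    HasSum (fun y => entry T x y (ξ y)) (T ξ x) := by
  classical
  have := (lp.hasSum_single (by norm_num) ξ).map ((lp.evalCLM ℂ _ 2 x).comp T)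
    (ContinuousLinearMap.continuous _)
  simpa [Function.comp_def, entry_apply, lp.evalCLM] using this

theorem ext_entry {T₁ T₂ : L2 Y H →L[ℂ] L2 Y H}
    (h : ∀ x y, entry T₁ x y = entry T₂ x y) : T₁ = T₂ := by
  ext ξ x
  refine (hasSum_entry_apply T₁ ξ x).unique ?_
  simpa only [h] using hasSum_entry_apply T₂ ξ x

theorem entry_comp_apply (T₁ T₂ : L2 Y H →L[ℂ] L2 Y H) (x z : Y) (v : H) :
    entry (T₁ ∘L T₂) x z v = ∑' y, entry T₁ x y (entry T₂ y z v) := by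
  classical
  simpa only [entry_apply, ContinuousLinearMap.comp_apply] using
    (hasSum_entry_apply T₁ (T₂ (lp.single 2 z v)) x).tsum_eq.symm

theorem entry_adjoint [CompleteSpace H] (T : L2 Y H →L[ℂ] L2 Y H) (x y : Y) :
    entry (ContinuousLinearMap.adjoint T) x y = ContinuousLinearMap.adjoint (entry T y x) := by
  classical
  ext v
  refine ext_inner_left ℂ fun w => ?_
  rw [ContinuousLinearMap.adjoint_inner_right, entry_apply, entry_apply,
    ← lp.inner_single_left (𝕜 := ℂ) (G := fun _ : Y => H),
    ContinuousLinearMap.adjoint_inner_right, lp.inner_single_right]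

/-- `T` is the weighted composition operator `ξ ↦ (x ↦ a x (ξ (σ x)))`. -/
theorem exists_entry_eq_ite [DecidableEq Y] (a : Y → (H →L[ℂ] H)) {C : ℝ} (hC : 0 ≤ C)
    (ha : ∀ x, ‖a x‖ ≤ C) (σ : Y → Y) (hσ : Set.InjOn σ (Function.support a)) :
    ∃ T : L2 Y H →L[ℂ] L2 Y H, ∀ x y, entry T x y = if σ x = y then a x else 0 := by
  classical
  set q := (2 : ℝ≥0∞).toReal
  have hq : 0 < q := by norm_num [q]
  have hsum : ∀ (ξ : L2 Y H) (s : Finset Y),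
      ∑ x ∈ s, ‖a x (ξ (σ x))‖ ^ q ≤ (C * ‖ξ‖) ^ q := by
    intro ξ s
    set s' := s.filter (a · ≠ 0)
    calc ∑ x ∈ s, ‖a x (ξ (σ x))‖ ^ q
        = ∑ x ∈ s', ‖a x (ξ (σ x))‖ ^ q := by
          refine (Finset.sum_filter_of_ne fun x _ hx h0 => ?_).symm
          simp [h0, Real.zero_rpow hq.ne'] at hx
      _ ≤ ∑ x ∈ s', C ^ q * ‖ξ (σ x)‖ ^ q := by
          refine Finset.sum_le_sum fun x _ => ?_
          rw [← Real.mul_rpow hC (norm_nonneg _)]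
          exact Real.rpow_le_rpow (norm_nonneg _) ((a x).le_of_opNorm_le (ha x) _) hq.le
      _ = C ^ q * ∑ y ∈ s'.image σ, ‖ξ y‖ ^ q := by
          rw [← Finset.mul_sum]
          congr 1
          exact (Finset.sum_image (s := s') (f := fun y => ‖ξ y‖ ^ q) fun x hx x' hx' =>
            hσ (Finset.mem_filter.1 hx).2 (Finset.mem_filter.1 hx').2).symm
      _ ≤ (C * ‖ξ‖) ^ q := by
          rw [Real.mul_rpow hC (norm_nonneg _)]
          exact mul_le_mul_of_nonneg_left (lp.sum_rpow_le_norm_rpow hq ξ _)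
            (Real.rpow_nonneg hC _)
  let L : L2 Y H →ₗ[ℂ] L2 Y H :=
    { toFun := fun ξ => ⟨fun x => a x (ξ (σ x)), memℓp_gen' (hsum ξ)⟩
      map_add' := fun ξ η => by ext x; exact map_add (a x) _ _
      map_smul' := fun c ξ => by ext x; exact map_smul (a x) _ _ }
  refine ⟨L.mkContinuous C fun ξ => lp.norm_le_of_forall_sum_le hq (by positivity) (hsum ξ),
    fun x y => ?_⟩
  ext v
  rw [entry_apply]
  by_cases hxy : σ x = y
  · subst hxy
    simp [L]
  · simp [L, hxy]

section Metric

variable {X : Type*} [PseudoMetricSpace X]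

theorem DBounded.finite (hball : ∀ (x : X) (r : ℝ), (Metric.ball x r).Finite) {B : Set X}
    (hB : DBounded (fun x y => dist x y) B) : B.Finite := by
  obtain ⟨C, hC⟩ := hB
  rcases B.eq_empty_or_nonempty with rfl | ⟨x₀, hx₀⟩
  · exact Set.finite_empty
  exact (hball x₀ (C + 1)).subset fun x hx => by
    rw [Metric.mem_ball]
    linarith [hC x hx x₀ hx₀]

theorem locallyCompact_of_isCompactOperator
    (hball : ∀ (x : X) (r : ℝ), (Metric.ball x r).Finite) {T : L2 X H →L[ℂ] L2 X H}
    (hT : ∀ x y, IsCompactOperator (entry T x y)) :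
    LocallyCompact (fun x y => dist x y) T :=
  ⟨hT, fun _ hB =>
    ((hB.finite hball).prod (hB.finite hball)).subset fun _ hp => ⟨hp.1, hp.2.1⟩⟩

end Metric

def IsInvariant (Γ : Type*) [SMul Γ Y] (T : L2 Y H →L[ℂ] L2 Y H) : Prop :=
  ∀ (γ : Γ) (x y : Y), entry T (γ • x) (γ • y) = entry T x y

end Roe

section OrbitCoordinates

variable {Γ X : Type*} [Group Γ] [MulAction Γ X] {D : Set X}

theorem bijective_smul_of_free (hfree : ∀ (γ : Γ) (x : X), γ • x = x → γ = 1)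
    (hD : ∀ x : X, ∃! d : X, d ∈ D ∧ ∃ γ : Γ, γ • x = d) :
    Function.Bijective fun p : Γ × D => p.1 • (p.2 : X) := by
  refine ⟨?_, fun x => ?_⟩
  · rintro ⟨g, d⟩ ⟨g', d'⟩ (h : g • (d : X) = g' • (d' : X))
    have hd : (g'⁻¹ * g) • (d : X) = d' := by rw [mul_smul, h, inv_smul_smul]
    obtain ⟨d₀, -, hd₀⟩ := hD d
    obtain rfl : d = d' :=
      Subtype.ext ((hd₀ d ⟨d.2, 1, one_smul _ _⟩).trans (hd₀ d' ⟨d'.2, _, hd⟩).symm)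
    obtain rfl := inv_mul_eq_one.1 (hfree _ _ hd)
    rfl
  · obtain ⟨d, ⟨hd, γ, rfl⟩, -⟩ := hD x
    exact ⟨(γ⁻¹, ⟨_, hd⟩), inv_smul_smul γ x⟩

variable (hbij : Function.Bijective fun p : Γ × D => p.1 • (p.2 : X))

def orbitEquiv : Γ × D ≃ X :=
  Equiv.ofBijective _ hbij

theorem orbitEquiv_symm_eq_iff {x : X} {p : Γ × D} :
    (orbitEquiv hbij).symm x = p ↔ p.1 • (p.2 : X) = x :=
  (orbitEquiv hbij).symm_apply_eq.trans eq_comm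

theorem smul_orbitEquiv_symm (x : X) :
    ((orbitEquiv hbij).symm x).1 • (((orbitEquiv hbij).symm x).2 : X) = x :=
  (orbitEquiv hbij).apply_symm_apply x

def relCoord (x y : X) : Γ × D × D :=
  let e := (orbitEquiv hbij).symm
  ((e x).1⁻¹ * (e y).1, (e x).2, (e y).2)

theorem relCoord_eq_iff {x y : X} {h : Γ} {d d' : D} :
    relCoord hbij x y = (h, d, d') ↔
      ∃ γ : Γ, γ • (d : X) = x ∧ (γ * h) • (d' : X) = y := by
  simp only [relCoord, Prod.mk.injEq]
  constructor
  · rintro ⟨rfl, rfl, rfl⟩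
    refine ⟨_, smul_orbitEquiv_symm hbij x, ?_⟩
    rw [mul_inv_cancel_left, smul_orbitEquiv_symm]
  · rintro ⟨γ, rfl, rfl⟩
    rw [(orbitEquiv_symm_eq_iff hbij (p := (γ, d))).2 rfl,
      (orbitEquiv_symm_eq_iff hbij (p := (γ * h, d'))).2 rfl]
    simp

theorem relCoord_smul_smul (γ : Γ) (x y : X) :
    relCoord hbij (γ • x) (γ • y) = relCoord hbij x y := by
  generalize hp : relCoord hbij x y = p
  obtain ⟨h, d, d'⟩ := p
  obtain ⟨γ', rfl, rfl⟩ := (relCoord_eq_iff hbij).1 hp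
  exact (relCoord_eq_iff hbij).2 ⟨γ * γ', mul_smul .., by rw [mul_assoc, mul_smul]⟩

theorem relCoord_smul (g : Γ) (d d' : D) : relCoord hbij d (g • (d' : X)) = (g, d, d') :=
  (relCoord_eq_iff hbij).2 ⟨1, one_smul .., by rw [one_mul]⟩

open Classical in
theorem exists_entry_eq_ite_relCoord {H : Type*} [NormedAddCommGroup H] [InnerProductSpace ℂ H]
    (p : Γ × D × D) (k : H →L[ℂ] H) :
    ∃ T : L2 X H →L[ℂ] L2 X H,
      ∀ x y, Roe.entry T x y = if relCoord hbij x y = p then k else 0 := by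
  classical
  set e := (orbitEquiv hbij).symm
  obtain ⟨h, d, d'⟩ := p
  have key : ∀ x y, relCoord hbij x y = (h, d, d') ↔
      ((e x).1 * h) • (d' : X) = y ∧ (e x).2 = d := by
    intro x y
    rw [relCoord_eq_iff]
    constructor
    · rintro ⟨γ, rfl, rfl⟩
      rw [(orbitEquiv_symm_eq_iff hbij (p := (γ, d))).2 rfl]
      exact ⟨rfl, rfl⟩
    · rintro ⟨rfl, rfl⟩
      exact ⟨_, smul_orbitEquiv_symm hbij x, rfl⟩
  have hσ : Set.InjOn (fun x => ((e x).1 * h) • (d' : X))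
      (Function.support fun x => if (e x).2 = d then k else 0) := by
    intro x₁ hx₁ x₂ hx₂ hσ
    have h₁ : (e x₁).2 = d := by by_contra hne; simp [hne] at hx₁
    have h₂ : (e x₂).2 = d := by by_contra hne; simp [hne] at hx₂
    have hγ := congrArg Prod.fst
      (hbij.1 (a₁ := ((e x₁).1 * h, d')) (a₂ := ((e x₂).1 * h, d')) hσ)
    rw [← smul_orbitEquiv_symm hbij x₁, ← smul_orbitEquiv_symm hbij x₂]
    simp only [e] at h₁ h₂ hγ
    rw [mul_right_cancel hγ, h₁, h₂]
  obtain ⟨T, hT⟩ := Roe.exists_entry_eq_ite (fun x => if (e x).2 = d then k else 0)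
    (norm_nonneg k) (fun x => by split_ifs <;> simp) _ hσ
  refine ⟨T, fun x y => ?_⟩
  by_cases h1 : ((e x).1 * h) • (d' : X) = y <;> by_cases h2 : (e x).2 = d <;>
    simp [hT, key, h1, h2]

end OrbitCoordinates

section PsiD

variable {H₀ X Γ : Type} [NormedAddCommGroup H₀] [InnerProductSpace ℂ H₀] [Group Γ]
  [MulAction Γ X] {D : Set X}

theorem psiD_add (T₁ T₂ : L2 X H₀ →L[ℂ] L2 X H₀) :
    psiD (Γ := Γ) D (T₁ + T₂) = psiD D T₁ + psiD D T₂ := by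
  funext g x y
  exact Roe.entry_add T₁ T₂ _ _

theorem psiD_smul (a : ℂ) (T : L2 X H₀ →L[ℂ] L2 X H₀) :
    psiD (Γ := Γ) D (a • T) = a • psiD D T := by
  funext g x y
  exact Roe.entry_smul a T _ _

theorem psiD_adjoint [CompleteSpace H₀] {T : L2 X H₀ →L[ℂ] L2 X H₀}
    (hT : Roe.IsInvariant Γ T) (g : Γ) :
    psiD D (ContinuousLinearMap.adjoint T) g = (psiD D T g⁻¹).conjTranspose := by
  ext x y : 2
  rw [Matrix.conjTranspose_apply, ContinuousLinearMap.star_eq_adjoint, psiD, psiD,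
    Roe.entry_adjoint, ← hT g⁻¹, inv_smul_smul]

theorem finite_psiD_ne_zero [PseudoMetricSpace X] [Finite D]
    (hball : ∀ (x : X) (r : ℝ), (Metric.ball x r).Finite)
    (hfree : ∀ (γ : Γ) (x : X), γ • x = x → γ = 1)
    {T : L2 X H₀ →L[ℂ] L2 X H₀} {R : ℝ}
    (hR : Roe.PropagationLE (fun x y => dist x y) T R) :
    {g : Γ | psiD D T g ≠ 0}.Finite := by
  have horbit : ∀ y : X, Function.Injective fun g : Γ => g • y :=
    fun y g g' (h : g • y = g' • y) =>
      (inv_mul_eq_one.1 (hfree _ y (by rw [mul_smul, h, inv_smul_smul]))).symm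
  refine (Set.finite_iUnion fun x : D => Set.finite_iUnion fun y : D =>
    (hball x (R + 1)).preimage (horbit y).injOn).subset fun g hg => ?_
  obtain ⟨x, y, hxy⟩ : ∃ x y : D, Roe.entry T x (g • (y : X)) ≠ 0 := by
    by_contra! h
    exact hg (funext₂ h)
  simp only [Set.mem_iUnion, Set.mem_preimage, Metric.mem_ball]
  exact ⟨x, y, by linarith [dist_comm (x : X) (g • (y : X)), not_lt.1 (mt (hR _ _) hxy)]⟩

variable (hbij : Function.Bijective fun p : Γ × D => p.1 • (p.2 : X))
include hbij

theorem psiD_comp [Fintype D] {T₁ T₂ : L2 X H₀ →L[ℂ] L2 X H₀}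
    (hT₂ : Roe.IsInvariant Γ T₂)
    (hfin : {h : Γ | psiD D T₁ h ≠ 0}.Finite) (g : Γ) :
    psiD D (T₁ ∘L T₂) g = ∑ᶠ h : Γ, psiD D T₁ h * psiD D T₂ (h⁻¹ * g) := by
  classical
  set s := hfin.toFinset
  rw [finsum_eq_sum_of_support_subset _ fun h hh => hfin.mem_toFinset.2 fun h0 => by
    simp [h0] at hh]
  ext x y v
  have hT₂' : ∀ (h : Γ) (d : D), Roe.entry T₂ (h • (d : X)) (g • (y : X)) =
      psiD D T₂ (h⁻¹ * g) d y := fun h d => by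
    have := hT₂ h d ((h⁻¹ * g) • (y : X))
    rwa [smul_smul, mul_inv_cancel_left] at this
  set φ : X → H₀ := fun z => Roe.entry T₁ x z (Roe.entry T₂ z (g • (y : X)) v)
  calc psiD D (T₁ ∘L T₂) g x y v
      = ∑' z, φ z := Roe.entry_comp_apply ..
    _ = ∑' p : Γ × D, φ (p.1 • (p.2 : X)) := ((orbitEquiv hbij).tsum_eq φ).symm
    _ = ∑ p ∈ s ×ˢ (Finset.univ : Finset D), φ (p.1 • (p.2 : X)) := by
        refine tsum_eq_sum fun p hp => ?_
        have : psiD D T₁ p.1 = 0 := by simpa [s] using hp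
        simp [φ, show Roe.entry T₁ x (p.1 • (p.2 : X)) = 0 from congrFun (congrFun this x) p.2]
    _ = (∑ h ∈ s, psiD D T₁ h * psiD D T₂ (h⁻¹ * g)) x y v := by
        simp [φ, Finset.sum_product, Matrix.sum_apply, Matrix.mul_apply, hT₂', psiD]

theorem entry_eq_psiD_relCoord {T : L2 X H₀ →L[ℂ] L2 X H₀}
    (hT : Roe.IsInvariant Γ T) (x y : X) :
    Roe.entry T x y = psiD (Γ := Γ) D T
      (relCoord hbij x y).1 (relCoord hbij x y).2.1 (relCoord hbij x y).2.2 := by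
  generalize hp : relCoord hbij x y = p
  obtain ⟨h, d, d'⟩ := p
  obtain ⟨γ, rfl, rfl⟩ := (relCoord_eq_iff hbij).1 hp
  rw [mul_smul, hT]
  rfl

theorem eq_of_psiD_eq {T₁ T₂ : L2 X H₀ →L[ℂ] L2 X H₀}
    (hT₁ : Roe.IsInvariant Γ T₁)
    (hT₂ : Roe.IsInvariant Γ T₂)
    (h : psiD (Γ := Γ) D T₁ = psiD D T₂) : T₁ = T₂ :=
  Roe.ext_entry fun x y => by
    rw [entry_eq_psiD_relCoord hbij hT₁, entry_eq_psiD_relCoord hbij hT₂, h]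

end PsiD

section Lift

variable {H₀ X Γ : Type} [NormedAddCommGroup H₀] [InnerProductSpace ℂ H₀] [Group Γ]
  [MulAction Γ X] [PseudoMetricSpace X] {D : Set X} [Fintype D]

theorem exists_psiD_eq (hbij : Function.Bijective fun p : Γ × D => p.1 • (p.2 : X))
    (hiso : ∀ (γ : Γ) (x y : X), dist (γ • x) (γ • y) = dist x y)
    (hball : ∀ (x : X) (r : ℝ), (Metric.ball x r).Finite)
    (f : Γ → Matrix D D (H₀ →L[ℂ] H₀)) (hfin : {g : Γ | f g ≠ 0}.Finite)
    (hcpt : ∀ (g : Γ) (x y : D), IsCompactOperator (f g x y)) :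
    ∃ T : L2 X H₀ →L[ℂ] L2 X H₀,
      Roe.LocallyCompact (fun x y => dist x y) T ∧
      (∃ R : ℝ, Roe.PropagationLE (fun x y => dist x y) T R) ∧
      Roe.IsInvariant Γ T ∧
      psiD D T = f := by
  classical
  set S : Finset (Γ × D × D) := hfin.toFinset ×ˢ Finset.univ
  set F : Γ × D × D → (H₀ →L[ℂ] H₀) := fun p => f p.1 p.2.1 p.2.2
  have hS : ∀ p, F p ≠ 0 → p ∈ S := fun p hp =>
    Finset.mem_product.2 ⟨hfin.mem_toFinset.2 fun h0 => hp (by simp [F, h0]), Finset.mem_univ _⟩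
  choose E hE using fun p => exists_entry_eq_ite_relCoord hbij p (F p)
  have hT : ∀ x y, Roe.entry (∑ p ∈ S, E p) x y = F (relCoord hbij x y) := by
    intro x y
    rw [Roe.entry_sum]
    simp only [hE]
    rw [Finset.sum_ite_eq, ite_eq_left_iff]
    exact fun hp => (not_not.1 (mt (hS _) hp)).symm
  refine ⟨∑ p ∈ S, E p,
    Roe.locallyCompact_of_isCompactOperator hball fun x y => by rw [hT]; exact hcpt ..,
    ⟨∑ p ∈ S, dist (p.2.1 : X) (p.1 • (p.2.2 : X)), fun x y (hxy : _ < dist x y) => ?_⟩,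
    fun γ x y => by rw [hT, hT, relCoord_smul_smul], ?_⟩
  · rw [hT]
    generalize hp : relCoord hbij x y = p at *
    obtain ⟨h, d, d'⟩ := p
    obtain ⟨γ, rfl, rfl⟩ := (relCoord_eq_iff hbij).1 hp
    by_contra hne
    rw [mul_smul, hiso] at hxy
    linarith [Finset.single_le_sum (fun _ _ => dist_nonneg) (hS _ hne)
      (f := fun p : Γ × D × D => dist (p.2.1 : X) (p.1 • (p.2.2 : X)))]
  · funext g x y
    exact (hT x (g • (y : X))).trans (by rw [relCoord_smul])

end Lift

theorem psiD_star_algebra_isomorphism_general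
    (H₀ : Type) [NormedAddCommGroup H₀] [InnerProductSpace ℂ H₀] [CompleteSpace H₀]
    (X : Type) [MetricSpace X]
    (hbg : ∀ r : ℝ, ∃ N : ℕ, ∀ x : X, (Metric.ball x r).Finite ∧ (Metric.ball x r).ncard ≤ N)
    (Γ : Type) [Group Γ] [MulAction Γ X]
    (hiso : ∀ (γ : Γ) (x y : X), dist (γ • x) (γ • y) = dist x y)
    (hfree : ∀ (γ : Γ) (x : X), γ • x = x → γ = 1)
    (D : Set X) [Fintype ↥D]
    (hD : ∀ x : X, ∃! d : X, d ∈ D ∧ ∃ γ : Γ, γ • x = d) :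
    -- ψ_D takes values in finitely supported families of matrices of compact operators
    (∀ T : L2 X H₀ →L[ℂ] L2 X H₀,
      Roe.LocallyCompact (fun x y : X => dist x y) T →
      (∃ R : ℝ, Roe.PropagationLE (fun x y : X => dist x y) T R) →
      (∀ (γ : Γ) (x y : X), Roe.entry T (γ • x) (γ • y) = Roe.entry T x y) →
      {g : Γ | psiD (Γ := Γ) D T g ≠ 0}.Finite ∧
        ∀ (g : Γ) (x y : ↥D), IsCompactOperator (psiD (Γ := Γ) D T g x y)) ∧
    -- ψ_D is additive
    (∀ T₁ T₂ : L2 X H₀ →L[ℂ] L2 X H₀,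
      Roe.LocallyCompact (fun x y : X => dist x y) T₁ →
      (∃ R : ℝ, Roe.PropagationLE (fun x y : X => dist x y) T₁ R) →
      (∀ (γ : Γ) (x y : X), Roe.entry T₁ (γ • x) (γ • y) = Roe.entry T₁ x y) →
      Roe.LocallyCompact (fun x y : X => dist x y) T₂ →
      (∃ R : ℝ, Roe.PropagationLE (fun x y : X => dist x y) T₂ R) →
      (∀ (γ : Γ) (x y : X), Roe.entry T₂ (γ • x) (γ • y) = Roe.entry T₂ x y) →
      psiD (Γ := Γ) D (T₁ + T₂) = fun g : Γ => psiD (Γ := Γ) D T₁ g + psiD (Γ := Γ) D T₂ g) ∧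
    -- ψ_D respects scalar multiplication
    (∀ (T : L2 X H₀ →L[ℂ] L2 X H₀) (a : ℂ),
      Roe.LocallyCompact (fun x y : X => dist x y) T →
      (∃ R : ℝ, Roe.PropagationLE (fun x y : X => dist x y) T R) →
      (∀ (γ : Γ) (x y : X), Roe.entry T (γ • x) (γ • y) = Roe.entry T x y) →
      psiD (Γ := Γ) D (a • T) = fun g : Γ => a • psiD (Γ := Γ) D T g) ∧
    -- ψ_D is multiplicative for the convolution product
    (∀ T₁ T₂ : L2 X H₀ →L[ℂ] L2 X H₀,
      Roe.LocallyCompact (fun x y : X => dist x y) T₁ →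
      (∃ R : ℝ, Roe.PropagationLE (fun x y : X => dist x y) T₁ R) →
      (∀ (γ : Γ) (x y : X), Roe.entry T₁ (γ • x) (γ • y) = Roe.entry T₁ x y) →
      Roe.LocallyCompact (fun x y : X => dist x y) T₂ →
      (∃ R : ℝ, Roe.PropagationLE (fun x y : X => dist x y) T₂ R) →
      (∀ (γ : Γ) (x y : X), Roe.entry T₂ (γ • x) (γ • y) = Roe.entry T₂ x y) →
      ∀ g : Γ, psiD (Γ := Γ) D (T₁ ∘L T₂) g = ∑ᶠ h : Γ, psiD (Γ := Γ) D T₁ h * psiD (Γ := Γ) D T₂ (h⁻¹ * g)) ∧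
    -- ψ_D is a *-map: ψ_D(T*)(g) = (ψ_D(T)(g⁻¹))*
    (∀ T : L2 X H₀ →L[ℂ] L2 X H₀,
      Roe.LocallyCompact (fun x y : X => dist x y) T →
      (∃ R : ℝ, Roe.PropagationLE (fun x y : X => dist x y) T R) →
      (∀ (γ : Γ) (x y : X), Roe.entry T (γ • x) (γ • y) = Roe.entry T x y) →
      ∀ g : Γ, psiD (Γ := Γ) D (ContinuousLinearMap.adjoint T) g =
        (psiD (Γ := Γ) D T g⁻¹).conjTranspose) ∧
    -- ψ_D is injective on ℂ[X]^Γ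
    (∀ T₁ T₂ : L2 X H₀ →L[ℂ] L2 X H₀,
      Roe.LocallyCompact (fun x y : X => dist x y) T₁ →
      (∃ R : ℝ, Roe.PropagationLE (fun x y : X => dist x y) T₁ R) →
      (∀ (γ : Γ) (x y : X), Roe.entry T₁ (γ • x) (γ • y) = Roe.entry T₁ x y) →
      Roe.LocallyCompact (fun x y : X => dist x y) T₂ →
      (∃ R : ℝ, Roe.PropagationLE (fun x y : X => dist x y) T₂ R) →
      (∀ (γ : Γ) (x y : X), Roe.entry T₂ (γ • x) (γ • y) = Roe.entry T₂ x y) →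
      psiD (Γ := Γ) D T₁ = psiD (Γ := Γ) D T₂ → T₁ = T₂) ∧
    -- ψ_D is surjective onto ℂ[Γ] ⊗ M_D(K(H₀))
    (∀ f : Γ → Matrix ↥D ↥D (H₀ →L[ℂ] H₀),
      {g : Γ | f g ≠ 0}.Finite →
      (∀ (g : Γ) (x y : ↥D), IsCompactOperator (f g x y)) →
      ∃ T : L2 X H₀ →L[ℂ] L2 X H₀,
        Roe.LocallyCompact (fun x y : X => dist x y) T ∧
        (∃ R : ℝ, Roe.PropagationLE (fun x y : X => dist x y) T R) ∧
        (∀ (γ : Γ) (x y : X), Roe.entry T (γ • x) (γ • y) = Roe.entry T x y) ∧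
        psiD (Γ := Γ) D T = f) := by
  have hball : ∀ (x : X) (r : ℝ), (Metric.ball x r).Finite := fun x r => ((hbg r).choose_spec x).1
  have hbij := bijective_smul_of_free hfree hD
  exact ⟨fun T hlc hR _ => ⟨finite_psiD_ne_zero hball hfree hR.choose_spec, fun _ _ _ => hlc.1 _ _⟩,
    fun T₁ T₂ _ _ _ _ _ _ => psiD_add T₁ T₂,
    fun T a _ _ _ => psiD_smul a T,
    fun _ _ _ hR₁ _ _ _ hT₂ => psiD_comp hbij hT₂ (finite_psiD_ne_zero hball hfree hR₁.choose_spec),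
    fun _ _ _ hT => psiD_adjoint hT,
    fun _ _ _ _ hT₁ _ _ hT₂ => eq_of_psiD_eq hbij hT₁ hT₂,
    fun f hfin hcpt => exists_psiD_eq hbij hiso hball f hfin hcpt⟩

/-- for a free isometric action of a countable group `Γ` with finitely many
orbits on a uniformly discrete bounded geometry space `X`, the map `ψ_D` is a *-algebra
isomorphism of `ℂ[X]^Γ` onto `ℂ[Γ] ⊗ M_D(K(H₀))`, i.e. onto the finitely supported
`Γ`-indexed families of `D × D` matrices of compact operators, with convolution product
and the star determined by `(u_g ⊗ k)* = u_{g⁻¹} ⊗ k*`. -/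
theorem psiD_star_algebra_isomorphism
    (H₀ : Type) [NormedAddCommGroup H₀] [InnerProductSpace ℂ H₀] [CompleteSpace H₀]
    [TopologicalSpace.SeparableSpace H₀] (hinf : ¬ FiniteDimensional ℂ H₀)
    (X : Type) [MetricSpace X]
    (hud : ∃ δ : ℝ, 0 < δ ∧ ∀ x y : X, x ≠ y → δ ≤ dist x y)
    (hbg : ∀ r : ℝ, ∃ N : ℕ, ∀ x : X, (Metric.ball x r).Finite ∧ (Metric.ball x r).ncard ≤ N)
    (Γ : Type) [Group Γ] [Countable Γ] [MulAction Γ X]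
    (hiso : ∀ (γ : Γ) (x y : X), dist (γ • x) (γ • y) = dist x y)
    (hfree : ∀ (γ : Γ) (x : X), γ • x = x → γ = 1)
    (D : Set X) [Fintype ↥D]
    (hD : ∀ x : X, ∃! d : X, d ∈ D ∧ ∃ γ : Γ, γ • x = d) :
    -- ψ_D takes values in finitely supported families of matrices of compact operators
    (∀ T : L2 X H₀ →L[ℂ] L2 X H₀,
      Roe.LocallyCompact (fun x y : X => dist x y) T →
      (∃ R : ℝ, Roe.PropagationLE (fun x y : X => dist x y) T R) →
      (∀ (γ : Γ) (x y : X), Roe.entry T (γ • x) (γ • y) = Roe.entry T x y) →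
      {g : Γ | psiD (Γ := Γ) D T g ≠ 0}.Finite ∧
        ∀ (g : Γ) (x y : ↥D), IsCompactOperator (psiD (Γ := Γ) D T g x y)) ∧
    -- ψ_D is additive
    (∀ T₁ T₂ : L2 X H₀ →L[ℂ] L2 X H₀,
      Roe.LocallyCompact (fun x y : X => dist x y) T₁ →
      (∃ R : ℝ, Roe.PropagationLE (fun x y : X => dist x y) T₁ R) →
      (∀ (γ : Γ) (x y : X), Roe.entry T₁ (γ • x) (γ • y) = Roe.entry T₁ x y) →
      Roe.LocallyCompact (fun x y : X => dist x y) T₂ →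
      (∃ R : ℝ, Roe.PropagationLE (fun x y : X => dist x y) T₂ R) →
      (∀ (γ : Γ) (x y : X), Roe.entry T₂ (γ • x) (γ • y) = Roe.entry T₂ x y) →
      psiD (Γ := Γ) D (T₁ + T₂) = fun g : Γ => psiD (Γ := Γ) D T₁ g + psiD (Γ := Γ) D T₂ g) ∧
    -- ψ_D respects scalar multiplication
    (∀ (T : L2 X H₀ →L[ℂ] L2 X H₀) (a : ℂ),
      Roe.LocallyCompact (fun x y : X => dist x y) T →
      (∃ R : ℝ, Roe.PropagationLE (fun x y : X => dist x y) T R) →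
      (∀ (γ : Γ) (x y : X), Roe.entry T (γ • x) (γ • y) = Roe.entry T x y) →
      psiD (Γ := Γ) D (a • T) = fun g : Γ => a • psiD (Γ := Γ) D T g) ∧
    -- ψ_D is multiplicative for the convolution product
    (∀ T₁ T₂ : L2 X H₀ →L[ℂ] L2 X H₀,
      Roe.LocallyCompact (fun x y : X => dist x y) T₁ →
      (∃ R : ℝ, Roe.PropagationLE (fun x y : X => dist x y) T₁ R) →
      (∀ (γ : Γ) (x y : X), Roe.entry T₁ (γ • x) (γ • y) = Roe.entry T₁ x y) →
      Roe.LocallyCompact (fun x y : X => dist x y) T₂ →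
      (∃ R : ℝ, Roe.PropagationLE (fun x y : X => dist x y) T₂ R) →
      (∀ (γ : Γ) (x y : X), Roe.entry T₂ (γ • x) (γ • y) = Roe.entry T₂ x y) →
      ∀ g : Γ, psiD (Γ := Γ) D (T₁ ∘L T₂) g = ∑ᶠ h : Γ, psiD (Γ := Γ) D T₁ h * psiD (Γ := Γ) D T₂ (h⁻¹ * g)) ∧
    -- ψ_D is a *-map: ψ_D(T*)(g) = (ψ_D(T)(g⁻¹))*
    (∀ T : L2 X H₀ →L[ℂ] L2 X H₀,
      Roe.LocallyCompact (fun x y : X => dist x y) T →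
      (∃ R : ℝ, Roe.PropagationLE (fun x y : X => dist x y) T R) →
      (∀ (γ : Γ) (x y : X), Roe.entry T (γ • x) (γ • y) = Roe.entry T x y) →
      ∀ g : Γ, psiD (Γ := Γ) D (ContinuousLinearMap.adjoint T) g =
        (psiD (Γ := Γ) D T g⁻¹).conjTranspose) ∧
    -- ψ_D is injective on ℂ[X]^Γ
    (∀ T₁ T₂ : L2 X H₀ →L[ℂ] L2 X H₀,
      Roe.LocallyCompact (fun x y : X => dist x y) T₁ →
      (∃ R : ℝ, Roe.PropagationLE (fun x y : X => dist x y) T₁ R) →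
      (∀ (γ : Γ) (x y : X), Roe.entry T₁ (γ • x) (γ • y) = Roe.entry T₁ x y) →
      Roe.LocallyCompact (fun x y : X => dist x y) T₂ →
      (∃ R : ℝ, Roe.PropagationLE (fun x y : X => dist x y) T₂ R) →
      (∀ (γ : Γ) (x y : X), Roe.entry T₂ (γ • x) (γ • y) = Roe.entry T₂ x y) →
      psiD (Γ := Γ) D T₁ = psiD (Γ := Γ) D T₂ → T₁ = T₂) ∧
    -- ψ_D is surjective onto ℂ[Γ] ⊗ M_D(K(H₀))
    (∀ f : Γ → Matrix ↥D ↥D (H₀ →L[ℂ] H₀),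
      {g : Γ | f g ≠ 0}.Finite →
      (∀ (g : Γ) (x y : ↥D), IsCompactOperator (f g x y)) →
      ∃ T : L2 X H₀ →L[ℂ] L2 X H₀,
        Roe.LocallyCompact (fun x y : X => dist x y) T ∧
        (∃ R : ℝ, Roe.PropagationLE (fun x y : X => dist x y) T R) ∧
        (∀ (γ : Γ) (x y : X), Roe.entry T (γ • x) (γ • y) = Roe.entry T x y) ∧
        psiD (Γ := Γ) D T = f) :=
  psiD_star_algebra_isomorphism_general H₀ X hbg Γ hiso hfree D hD

end
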